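/- arXiv:2310.14559 — 2 statements merged into one kernel-verified Lean document; each statement's English description precedes it below -/
import Mathlib

section
/- Fix integers r ≥ 1 and S ≥ 1, real times τ₁ < τ₂ < ⋯ < τ_{S+1}, nonnegative constants L₁, …, L_S, and for each s = 1, …, S a map f_s : ℝʳ → ℝʳ that is L_s-Lipschitz with respect to the supremum norm. Let ε ≥ 0. Suppose the 'true' states N*₁, …, N*_{S+1} ∈ ℝʳ and the 'clustered' states N₁, …, N_{S+1} ∈ ℝʳ satisfy: (i) N₁ = N*₁; (ii) for each s there is a differentiable M*_s : [τ_s, τ_{s+1}] → ℝʳ with M*_s(τ_s) = N*_s, (M*_s)'(t) = f_s(M*_s(t)) for all t ∈ [τ_s, τ_{s+1}], and N*_{s+1} = M*_s(τ_{s+1}); (iii) for each s there is a differentiable M_s : [τ_s, τ_{s+1}] → ℝʳ with M_s(τ_s) = N_s, (M_s)'(t) = f_s(M_s(t)) for all t ∈ [τ_s, τ_{s+1}], and ‖N_{s+1} − M_s(τ_{s+1})‖_∞ ≤ ε. Then for every s with 2 ≤ s ≤ S+1, ‖N*_s − N_s‖_∞ ≤ ε · Σ_{σ=3}^{s+1}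 exp(Σ_{ν=σ}^{s} L_{ν−1}(τ_ν − τ_{ν−1})), where an empty inner sum is taken to be 0, and ‖N*₁ − N₁‖_∞ = 0. -/
/-!
The true and the clustered states both evolve by the same Lipschitz flow on each epoch, so by
Grönwall's inequality the flow multiplies their distance by at most `exp (L_s (τ_{s+1} - τ_s))`,
and clustering then adds at most `ε`. Unrolling the recursion
`e_{s+1} ≤ e_s exp (L_s (τ_{s+1} - τ_s)) + ε` from `e_1 = 0` gives the stated geometric-type sum.
-/

open Finset Real

theorem sum_Icc_prod_Icc_succ_top {R : Type*} [CommSemiring R] (c : ℕ → R) {a s : ℕ}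
    (ha : a ≤ s + 1 + 1) :
    ∑ σ ∈ Icc a (s + 1 + 1), ∏ ν ∈ Icc σ (s + 1), c ν =
      (∑ σ ∈ Icc a (s + 1), ∏ ν ∈ Icc σ s, c ν) * c (s + 1) + 1 := by
  rw [sum_Icc_succ_top ha, Icc_eq_empty_of_lt (Nat.lt_succ_self (s + 1)), prod_empty, sum_mul]
  congr 1
  refine sum_congr rfl fun σ hσ => ?_
  exact prod_Icc_succ_top (by simp at hσ; omega) c

theorem le_mul_sum_prod_of_le_mul_add {e c : ℕ → ℝ} {ε : ℝ} {S : ℕ} (hc : ∀ ν, 0 ≤ c ν)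
    (he : e 1 = 0) (hstep : ∀ s, 1 ≤ s → s ≤ S → e (s + 1) ≤ e s * c (s + 1) + ε) :
    ∀ s, 1 ≤ s → s ≤ S + 1 → e s ≤ ε * ∑ σ ∈ Icc 3 (s + 1), ∏ ν ∈ Icc σ s, c ν := by
  intro s hs
  induction s, hs using Nat.le_induction with
  | base => simp [he]
  | succ s hs ih =>
    intro hsS
    calc e (s + 1) ≤ e s * c (s + 1) + ε := hstep s hs (by omega)
      _ ≤ (ε * ∑ σ ∈ Icc 3 (s + 1), ∏ ν ∈ Icc σ s, c ν) * c (s + 1) + ε := by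
        gcongr
        exacts [hc _, ih (by omega)]
      _ = ε * ∑ σ ∈ Icc 3 (s + 1 + 1), ∏ ν ∈ Icc σ (s + 1), c ν := by
        rw [sum_Icc_prod_Icc_succ_top c (by omega)]
        ring

theorem norm_sub_le_of_trajectories_ODE {E : Type*} [NormedAddCommGroup E] [NormedSpace ℝ E]
    {v : E → E} {K : ℝ} (hK : 0 ≤ K) (hv : ∀ x y, ‖v x - v y‖ ≤ K * ‖x - y‖)
    {a b : ℝ} (hab : a ≤ b) {M₁ M₂ : ℝ → E}
    (hM₁ : ∀ t ∈ Set.Icc a b, HasDerivAt M₁ (v (M₁ t)) t)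
    (hM₂ : ∀ t ∈ Set.Icc a b, HasDerivAt M₂ (v (M₂ t)) t) :
    ‖M₁ b - M₂ b‖ ≤ ‖M₁ a - M₂ a‖ * exp (K * (b - a)) := by
  have hLip : LipschitzWith K.toNNReal v :=
    LipschitzWith.of_dist_le' fun x y => by simpa only [dist_eq_norm] using hv x y
  have := dist_le_of_trajectories_ODE (v := fun _ => v) (fun _ => hLip)
    (fun t ht => (hM₁ t ht).continuousAt.continuousWithinAt)
    (fun t ht => (hM₁ t (Set.Ico_subset_Icc_self ht)).hasDerivWithinAt)
    (fun t ht => (hM₂ t ht).continuousAt.continuousWithinAt)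
    (fun t ht => (hM₂ t (Set.Ico_subset_Icc_self ht)).hasDerivWithinAt)
    le_rfl b (Set.right_mem_Icc.2 hab)
  simpa only [dist_eq_norm, Real.coe_toNNReal _ hK] using this

theorem norm_sub_le_of_trajectories_ODE_add {E : Type*} [NormedAddCommGroup E]
    [NormedSpace ℝ E] {v : E → E} {K : ℝ} (hK : 0 ≤ K) (hv : ∀ x y, ‖v x - v y‖ ≤ K * ‖x - y‖)
    {a b : ℝ} (hab : a ≤ b) {M₁ M₂ : ℝ → E}
    (hM₁ : ∀ t ∈ Set.Icc a b, HasDerivAt M₁ (v (M₁ t)) t)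
    (hM₂ : ∀ t ∈ Set.Icc a b, HasDerivAt M₂ (v (M₂ t)) t) {y : E} {ε : ℝ}
    (hy : ‖y - M₂ b‖ ≤ ε) :
    ‖M₁ b - y‖ ≤ ‖M₁ a - M₂ a‖ * exp (K * (b - a)) + ε :=
  calc ‖M₁ b - y‖ ≤ ‖M₁ b - M₂ b‖ + ‖y - M₂ b‖ := by
        simpa only [dist_eq_norm] using dist_triangle_right (M₁ b) y (M₂ b)
    _ ≤ _ := add_le_add (norm_sub_le_of_trajectories_ODE hK hv hab hM₁ hM₂) hy

theorem clustered_state_space_error_general (r S : ℕ)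
    (τ : ℕ → ℝ) (hτ : ∀ s, 1 ≤ s → s ≤ S → τ s < τ (s + 1))
    (L : ℕ → ℝ) (hL : ∀ s, 1 ≤ s → s ≤ S → 0 ≤ L s)
    (f : ℕ → (Fin r → ℝ) → (Fin r → ℝ))
    (hf : ∀ s, 1 ≤ s → s ≤ S → ∀ u v : Fin r → ℝ, ‖f s u - f s v‖ ≤ L s * ‖u - v‖)
    (ε : ℝ)
    (Nstar N : ℕ → (Fin r → ℝ))
    (hinit : N 1 = Nstar 1)
    (htrue : ∀ s, 1 ≤ s → s ≤ S → ∃ M : ℝ → (Fin r → ℝ),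
      M (τ s) = Nstar s ∧
      (∀ t ∈ Set.Icc (τ s) (τ (s + 1)), HasDerivAt M (f s (M t)) t) ∧
      Nstar (s + 1) = M (τ (s + 1)))
    (hclust : ∀ s, 1 ≤ s → s ≤ S → ∃ M : ℝ → (Fin r → ℝ),
      M (τ s) = N s ∧
      (∀ t ∈ Set.Icc (τ s) (τ (s + 1)), HasDerivAt M (f s (M t)) t) ∧
      ‖N (s + 1) - M (τ (s + 1))‖ ≤ ε) :
    ‖Nstar 1 - N 1‖ = 0 ∧
    ∀ s, 2 ≤ s → s ≤ S + 1 →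
      ‖Nstar s - N s‖ ≤
        ε * ∑ σ ∈ Finset.Icc 3 (s + 1),
          Real.exp (∑ ν ∈ Finset.Icc σ s, L (ν - 1) * (τ ν - τ (ν - 1))) := by
  have h₁ : ‖Nstar 1 - N 1‖ = 0 := by rw [hinit, sub_self, norm_zero]
  refine ⟨h₁, fun s hs hsS => ?_⟩
  simp_rw [Real.exp_sum]
  refine le_mul_sum_prod_of_le_mul_add (e := fun s => ‖Nstar s - N s‖)
    (fun _ => (exp_pos _).le) h₁ (fun s hs₁ hsS => ?_) s (by omega) hsS
  obtain ⟨Mstar, hMstar₀, hMstar, hNstar⟩ := htrue s hs₁ hsS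
  obtain ⟨M, hM₀, hM, hMε⟩ := hclust s hs₁ hsS
  simp only [Nat.add_sub_cancel]
  rw [hNstar, ← hMstar₀, ← hM₀]
  exact norm_sub_le_of_trajectories_ODE_add (hL s hs₁ hsS) (hf s hs₁ hsS) (hτ s hs₁ hsS).le
    hMstar hM hMε

/-- **Proposition 4 of the paper: global approximation error of the clustered state space.**
`f s` is the (`L s`-Lipschitz in the sup norm) ODE transition function at epoch `s`, the
true states satisfy `N*_{s+1} = M*_s(τ_{s+1})` where `M*_s` solves the ODE from `N*_s`,
and the clustered states satisfy `‖N_{s+1} − M_s(τ_{s+1})‖_∞ ≤ ε` where `M_s` solves the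
ODE from `N_s` (each centroid is within `ε` of the exact successor). Then
`‖N*_s − N_s‖_∞ ≤ ε ∑_{σ=3}^{s+1} exp (∑_{ν=σ}^{s} L_{ν−1}(τ_ν − τ_{ν−1}))` for
`2 ≤ s ≤ S+1`, and the error at `s = 1` is `0`. The norm on `Fin r → ℝ` is the sup norm. -/
theorem clustered_state_space_error (r S : ℕ) (hr : 1 ≤ r) (hS : 1 ≤ S)
    (τ : ℕ → ℝ) (hτ : ∀ s, 1 ≤ s → s ≤ S → τ s < τ (s + 1))
    (L : ℕ → ℝ) (hL : ∀ s, 1 ≤ s → s ≤ S → 0 ≤ L s)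
    (f : ℕ → (Fin r → ℝ) → (Fin r → ℝ))
    (hf : ∀ s, 1 ≤ s → s ≤ S → ∀ u v : Fin r → ℝ, ‖f s u - f s v‖ ≤ L s * ‖u - v‖)
    (ε : ℝ) (hε : 0 ≤ ε)
    (Nstar N : ℕ → (Fin r → ℝ))
    (hinit : N 1 = Nstar 1)
    (htrue : ∀ s, 1 ≤ s → s ≤ S → ∃ M : ℝ → (Fin r → ℝ),
      M (τ s) = Nstar s ∧
      (∀ t ∈ Set.Icc (τ s) (τ (s + 1)), HasDerivAt M (f s (M t)) t) ∧
      Nstar (s + 1) = M (τ (s + 1)))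
    (hclust : ∀ s, 1 ≤ s → s ≤ S → ∃ M : ℝ → (Fin r → ℝ),
      M (τ s) = N s ∧
      (∀ t ∈ Set.Icc (τ s) (τ (s + 1)), HasDerivAt M (f s (M t)) t) ∧
      ‖N (s + 1) - M (τ (s + 1))‖ ≤ ε) :
    ‖Nstar 1 - N 1‖ = 0 ∧
    ∀ s, 2 ≤ s → s ≤ S + 1 →
      ‖Nstar s - N s‖ ≤
        ε * ∑ σ ∈ Finset.Icc 3 (s + 1),
          Real.exp (∑ ν ∈ Finset.Icc σ s, L (ν - 1) * (τ ν - τ (ν - 1))) :=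
  clustered_state_space_error_general r S τ hτ L hL f hf ε Nstar N hinit htrue hclust
end

section
/- Let ε ≥ 0 and let p₁, …, p_n ∈ ℝʳ with n ≥ 1. For k = 1, …, n define m_k, M_k ∈ ℝʳ by (m_k)_j = min_{1 ≤ i ≤ k} (p_i)_j and (M_k)_j = max_{1 ≤ i ≤ k} (p_i)_j (componentwise running minimum and maximum). Suppose that for every k = 1, …, n−1, max(‖p_{k+1} − m_k‖_∞, ‖p_{k+1} − M_k‖_∞) ≤ ε. Then ‖M_n − m_n‖_∞ ≤ ε, and consequently ‖p_i − p_j‖_∞ ≤ ε for all 1 ≤ i, j ≤ n. -/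
/-!
Work coordinatewise. Adding a value `x` to a cluster whose running minimum and maximum are `m`
and `M` turns the spread `M - m` into `max x M - min x m`, which is one of `0`, `x - m`,
`M - x` and `M - m`; the acceptance test bounds the first three by `ε` and induction the last.
Every state lies in the box `[m_n, M_n]`, so its diameter bounds the distance of any two states.
-/

open Finset

theorem max_sub_min_le_of_abs_sub_le {α : Type*} [AddCommGroup α] [LinearOrder α]
    [IsOrderedAddMonoid α] {x m M ε : α} (hm : |x - m| ≤ ε) (hM : |x - M| ≤ ε)
    (hmM : M - m ≤ ε) : max x M - min x m ≤ ε := by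
  have hxm : x ≤ ε + m := sub_le_iff_le_add.1 ((le_abs_self _).trans hm)
  have hMx : M ≤ ε + x :=
    sub_le_iff_le_add.1 ((le_abs_self _).trans ((abs_sub_comm M x).trans_le hM))
  have hx : x ≤ ε + x := le_add_of_nonneg_left ((abs_nonneg _).trans hm)
  rw [sub_le_iff_le_add, ← min_add_add_left, max_le_iff, le_min_iff, le_min_iff]
  exact ⟨⟨hx, hxm⟩, hMx, sub_le_iff_le_add.1 hmM⟩

section SupNorm

variable {ι κ : Type*} [Fintype ι]

theorem norm_sup_sub_inf_le {x m M : ι → ℝ} {ε : ℝ} (hm : ‖x - m‖ ≤ ε) (hM : ‖x - M‖ ≤ ε)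
    (hmM : ‖M - m‖ ≤ ε) : ‖(x ⊔ M) - (x ⊓ m)‖ ≤ ε := by
  refine (pi_norm_le_iff_of_nonneg ((norm_nonneg _).trans hm)).2 fun j => ?_
  have hcoord {v : ι → ℝ} (hv : ‖v‖ ≤ ε) : |v j| ≤ ε := (norm_le_pi_norm v j).trans hv
  have hspread_nonneg : 0 ≤ (x ⊔ M - x ⊓ m) j := sub_nonneg.2 (inf_le_left.trans le_sup_left)
  rw [Real.norm_eq_abs, abs_of_nonneg hspread_nonneg, Pi.sub_apply, Pi.sup_apply, Pi.inf_apply]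
  exact max_sub_min_le_of_abs_sub_le (hcoord hm) (hcoord hM) ((le_abs_self _).trans (hcoord hmM))

theorem norm_sub_le_norm_sup'_sub_inf' {s : Finset κ} (hs : s.Nonempty) (p : κ → ι → ℝ)
    {a b : κ} (ha : a ∈ s) (hb : b ∈ s) : ‖p a - p b‖ ≤ ‖s.sup' hs p - s.inf' hs p‖ := by
  rw [← dist_eq_norm, ← dist_eq_norm, dist_comm _ (s.inf' hs p)]
  exact Real.dist_le_of_mem_pi_Icc ⟨inf'_le p ha, le_sup' p ha⟩ ⟨inf'_le p hb, le_sup' p hb⟩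

theorem norm_sup'_Icc_sub_inf'_Icc_le {p : ℕ → ι → ℝ} {ε : ℝ} (hε : 0 ≤ ε) {n : ℕ}
    (haccept : ∀ k (hk : 1 ≤ k), k < n →
      ‖p (k + 1) - (Icc 1 k).inf' (nonempty_Icc.2 hk) p‖ ≤ ε ∧
        ‖p (k + 1) - (Icc 1 k).sup' (nonempty_Icc.2 hk) p‖ ≤ ε)
    (hn : 1 ≤ n) :
    ‖(Icc 1 n).sup' (nonempty_Icc.2 hn) p - (Icc 1 n).inf' (nonempty_Icc.2 hn) p‖ ≤ ε := by
  induction n, hn using Nat.le_induction with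
  | base => simp [hε]
  | succ k hk ih =>
    obtain ⟨hinf, hsup⟩ := haccept k hk k.lt_succ_self
    have hspread := ih fun i hi hik => haccept i hi (hik.trans k.lt_succ_self)
    simp_rw [← insert_Icc_right_eq_Icc_add_one (hk.trans k.le_succ)]
    rw [sup'_insert (H := nonempty_Icc.2 hk), inf'_insert (H := nonempty_Icc.2 hk)]
    exact norm_sup_sub_inf_le hinf hsup hspread

end SupNorm

/-- **Proposition 3 of the paper: bounded ℓ∞-diameter of each cluster.**
States `p 1, …, p n` are assigned sequentially to a cluster; letting `m_k` and `M_k`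
denote the componentwise running minimum and maximum of `p 1, …, p k`, the state
`p (k+1)` is accepted only if `max (‖p(k+1) − m_k‖_∞, ‖p(k+1) − M_k‖_∞) ≤ ε`.
Then the final elementwise min and max are at ℓ∞-distance at most `ε`, and hence any
two states in the cluster are at ℓ∞-distance at most `ε`.
The norm on `Fin r → ℝ` is the sup norm. -/
theorem cluster_diameter_bound {r : ℕ} (ε : ℝ) (hε : 0 ≤ ε) (n : ℕ) (hn : 1 ≤ n)
    (p : ℕ → (Fin r → ℝ))
    (haccept : ∀ k, ∀ hk : 1 ≤ k, k ≤ n - 1 →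
      max ‖p (k + 1) - (fun j => (Finset.Icc 1 k).inf' (Finset.nonempty_Icc.mpr hk)
            (fun i => p i j))‖
          ‖p (k + 1) - (fun j => (Finset.Icc 1 k).sup' (Finset.nonempty_Icc.mpr hk)
            (fun i => p i j))‖ ≤ ε) :
    ‖(fun j => (Finset.Icc 1 n).sup' (Finset.nonempty_Icc.mpr hn) (fun i => p i j)) -
      (fun j => (Finset.Icc 1 n).inf' (Finset.nonempty_Icc.mpr hn) (fun i => p i j))‖ ≤ ε ∧
    ∀ i j, 1 ≤ i → i ≤ n → 1 ≤ j → j ≤ n → ‖p i - p j‖ ≤ ε := by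
  have hsup (s : Finset ℕ) (hs : s.Nonempty) : (fun j => s.sup' hs fun i => p i j) = s.sup' hs p :=
    funext fun j => (s.sup'_apply hs p j).symm
  have hinf (s : Finset ℕ) (hs : s.Nonempty) : (fun j => s.inf' hs fun i => p i j) = s.inf' hs p :=
    funext fun j => (s.inf'_apply hs p j).symm
  simp only [hsup, hinf] at haccept ⊢
  have hspread := norm_sup'_Icc_sub_inf'_Icc_le hε
    (fun k hk hkn => max_le_iff.1 (haccept k hk (Nat.le_sub_one_of_lt hkn))) hn
  exact ⟨hspread, fun i j hi hin hj hjn =>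
    (norm_sub_le_norm_sup'_sub_inf' _ p (mem_Icc.2 ⟨hi, hin⟩) (mem_Icc.2 ⟨hj, hjn⟩)).trans hspread⟩
end
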